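/- arXiv:2407.00442 — 2 statements merged into one kernel-verified Lean document; each statement's English description precedes it below -/
import Mathlib

section
/- Assume the L² stability estimate: there is a constant c > 0 such that ‖w‖_{L²(Ω)} ≤ c(‖Δw‖_{L²(Ω)} + ‖w‖_{L²(∂Ω)}) for every function w twice continuously differentiable on a neighborhood of the closure of Ω. Let u be twice continuously differentiable on a neighborhood of the closure of Ω with −Δu = f on Ω and u = g σ-almost everywhere on ∂Ω, and let u_θ be any function twice continuously differentiable on a neighborhood of the closure of Ω. Then ‖u − u_θ‖²_{L²(Ω)} ≤ 2c² max(1, 1/α) · L(u_θ). -/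
open MeasureTheory Set

noncomputable section

/-- Partial derivative in coordinate direction `i`. -/
def pder (d : ℕ) (i : Fin d) (w : (Fin d → ℝ) → ℝ) : (Fin d → ℝ) → ℝ :=
  fun x => fderiv ℝ w x (Pi.single i 1)

/-- Laplacian `Δw = Σ_i ∂²w/∂x_i²`. -/
def lap (d : ℕ) (w : (Fin d → ℝ) → ℝ) : (Fin d → ℝ) → ℝ :=
  fun x => ∑ i : Fin d, pder d i (pder d i w) x

/-- `w` is `k` times continuously differentiable on a neighborhood of `D`. -/
def CkNear (d k : ℕ) (D : Set (Fin d → ℝ)) (w : (Fin d → ℝ) → ℝ) : Prop :=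
  ∃ V, IsOpen V ∧ D ⊆ V ∧ ContDiffOn ℝ k w V

/-- The continuous PINN loss
`L(v) = ‖Δv + f‖²_{L²(Ω)} + α ‖v − g‖²_{L²(∂Ω)}`. -/
def pinnLoss (d : ℕ) (Ω : Set (Fin d → ℝ)) (σm : Measure (Fin d → ℝ))
    (f g : (Fin d → ℝ) → ℝ) (α : ℝ) (v : (Fin d → ℝ) → ℝ) : ℝ :=
  (∫ x in Ω, (lap d v x + f x)^2) + α * ∫ x, (v x - g x)^2 ∂σm

/-!
The error `w = u - uθ` is admissible in the stability estimate. On `Ω` the PDE gives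
`Δw = Δu - Δuθ = -(Δuθ + f)`, and on the boundary `w = g - uθ` σ-a.e., so the right-hand side
of the estimate is `c (√B + √C)` with `B, C` the two terms of the loss. Squaring and
`(a + b)² ≤ 2 (a² + b²)` give `‖w‖² ≤ 2c² (B + C)`, and `B + C ≤ max 1 (1/α) (B + α C)`.
-/

section Laplacian

variable {d : ℕ} {u v : (Fin d → ℝ) → ℝ} {x : Fin d → ℝ}

lemma pder_sub_apply (i : Fin d) (hu : DifferentiableAt ℝ u x) (hv : DifferentiableAt ℝ v x) :
    pder d i (fun y => u y - v y) x = pder d i u x - pder d i v x := by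
  simp only [pder, fderiv_fun_sub hu hv, sub_apply]

lemma ContDiffAt.differentiableAt_pder (i : Fin d) (hu : ContDiffAt ℝ 2 u x) :
    DifferentiableAt ℝ (pder d i u) x :=
  ((hu.fderiv_right (m := 1) (by norm_num)).differentiableAt one_ne_zero).clm_apply
    (differentiableAt_const _)

lemma lap_sub_apply (hu : ContDiffAt ℝ 2 u x) (hv : ContDiffAt ℝ 2 v x) :
    lap d (fun y => u y - v y) x = lap d u x - lap d v x := by
  unfold lap
  rw [← Finset.sum_sub_distrib]
  refine Finset.sum_congr rfl fun i _ => ?_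
  have hpder : pder d i (fun y => u y - v y) =ᶠ[nhds x] fun y => pder d i u y - pder d i v y := by
    filter_upwards [hu.eventually (by norm_num), hv.eventually (by norm_num)] with y hu' hv'
    exact pder_sub_apply i (hu'.differentiableAt (by norm_num)) (hv'.differentiableAt (by norm_num))
  rw [pder, hpder.fderiv_eq]
  exact pder_sub_apply i (hu.differentiableAt_pder i) (hv.differentiableAt_pder i)

end Laplacian

section CkNear

variable {d k : ℕ} {D : Set (Fin d → ℝ)} {u v : (Fin d → ℝ) → ℝ}

lemma CkNear.contDiffAt (hu : CkNear d k D u) {x : Fin d → ℝ} (hx : x ∈ D) :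
    ContDiffAt ℝ k u x := by
  obtain ⟨V, hVo, hDV, hV⟩ := hu
  exact hV.contDiffAt (hVo.mem_nhds (hDV hx))

lemma CkNear.sub (hu : CkNear d k D u) (hv : CkNear d k D v) :
    CkNear d k D (fun y => u y - v y) := by
  obtain ⟨U, hUo, hDU, hU⟩ := hu
  obtain ⟨V, hVo, hDV, hV⟩ := hv
  exact ⟨U ∩ V, hUo.inter hVo, subset_inter hDU hDV,
    (hU.mono inter_subset_left).sub (hV.mono inter_subset_right)⟩

end CkNear

lemma le_two_mul_sq_mul_add_of_sqrt_le {A B C c : ℝ} (hA : 0 ≤ A) (hB : 0 ≤ B) (hC : 0 ≤ C)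
    (h : Real.sqrt A ≤ c * (Real.sqrt B + Real.sqrt C)) :
    A ≤ 2 * c ^ 2 * (B + C) :=
  calc A = Real.sqrt A ^ 2 := (Real.sq_sqrt hA).symm
    _ ≤ (c * (Real.sqrt B + Real.sqrt C)) ^ 2 := pow_le_pow_left₀ (Real.sqrt_nonneg _) h 2
    _ = c ^ 2 * (Real.sqrt B + Real.sqrt C) ^ 2 := by ring
    _ ≤ c ^ 2 * (2 * (Real.sqrt B ^ 2 + Real.sqrt C ^ 2)) := by gcongr; exact add_sq_le
    _ = 2 * c ^ 2 * (B + C) := by rw [Real.sq_sqrt hB, Real.sq_sqrt hC]; ring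

lemma add_le_max_one_inv_mul_add {B C α : ℝ} (hB : 0 ≤ B) (hC : 0 ≤ C) (hα : 0 < α) :
    B + C ≤ max 1 (1 / α) * (B + α * C) := by
  have hαC : C ≤ max 1 (1 / α) * (α * C) := by
    rw [← mul_assoc]
    exact le_mul_of_one_le_left hC ((div_le_iff₀ hα).mp (le_max_right _ _))
  have hB' : B ≤ max 1 (1 / α) * B := le_mul_of_one_le_left hB (le_max_left _ _)
  linarith [mul_add (max 1 (1 / α)) B (α * C)]

theorem pinn_L2_bound_by_loss_general {d : ℕ}
    (Ω : Set (Fin d → ℝ)) (hΩo : IsOpen Ω)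
    (σm : Measure (Fin d → ℝ))
    (f g : (Fin d → ℝ) → ℝ)
    (α : ℝ) (hα : 0 < α)
    (c : ℝ)
    (hstab : ∀ w, CkNear d 2 (closure Ω) w →
      Real.sqrt (∫ x in Ω, (w x)^2)
        ≤ c * (Real.sqrt (∫ x in Ω, (lap d w x)^2) + Real.sqrt (∫ x, (w x)^2 ∂σm)))
    (u uθ : (Fin d → ℝ) → ℝ)
    (hu : CkNear d 2 (closure Ω) u) (huθ : CkNear d 2 (closure Ω) uθ)
    (hpde : ∀ x ∈ Ω, - lap d u x = f x) (hbc : ∀ᵐ x ∂σm, u x = g x) :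
    (∫ x in Ω, (u x - uθ x)^2) ≤ 2 * c^2 * max 1 (1/α) * pinnLoss d Ω σm f g α uθ := by
  have hlap : (∫ x in Ω, (lap d (fun y => u y - uθ y) x)^2) = ∫ x in Ω, (lap d uθ x + f x)^2 := by
    refine setIntegral_congr_fun hΩo.measurableSet fun x hx => ?_
    have hx' := subset_closure hx
    rw [lap_sub_apply (hu.contDiffAt hx') (huθ.contDiffAt hx'), ← hpde x hx]
    ring
  have hbdry : (∫ x, (u x - uθ x)^2 ∂σm) = ∫ x, (uθ x - g x)^2 ∂σm := by
    refine integral_congr_ae ?_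
    filter_upwards [hbc] with x hx
    rw [hx]
    ring
  have hstab_err := hstab _ (hu.sub huθ)
  rw [hlap, hbdry] at hstab_err
  have hB : 0 ≤ ∫ x in Ω, (lap d uθ x + f x)^2 := integral_nonneg fun _ => sq_nonneg _
  have hC : 0 ≤ ∫ x, (uθ x - g x)^2 ∂σm := integral_nonneg fun _ => sq_nonneg _
  calc (∫ x in Ω, (u x - uθ x)^2)
      ≤ 2 * c ^ 2 * ((∫ x in Ω, (lap d uθ x + f x)^2) + ∫ x, (uθ x - g x)^2 ∂σm) :=
        le_two_mul_sq_mul_add_of_sqrt_le (integral_nonneg fun _ => sq_nonneg _) hB hC hstab_err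
    _ ≤ 2 * c ^ 2 * (max 1 (1 / α) * pinnLoss d Ω σm f g α uθ) := by
        gcongr
        exact add_le_max_one_inv_mul_add hB hC hα
    _ = 2 * c^2 * max 1 (1/α) * pinnLoss d Ω σm f g α uθ := by ring

/-- Stability of the Poisson problem implies
`‖u − u_θ‖²_{L²(Ω)} ≤ 2 c² max(1, 1/α) L(u_θ)`. -/
theorem pinn_L2_bound_by_loss {d : ℕ} (hd : 1 ≤ d)
    (Ω : Set (Fin d → ℝ)) (hΩo : IsOpen Ω) (hΩb : Bornology.IsBounded Ω)
    (σm : Measure (Fin d → ℝ)) (hσfin : IsFiniteMeasure σm)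
    (hσsupp : σm (frontier Ω)ᶜ = 0)
    (f g : (Fin d → ℝ) → ℝ)
    (hfc : ContinuousOn f Ω) (hgc : ContinuousOn g (frontier Ω))
    (Mf Mg : ℝ) (hf : ∀ x ∈ Ω, |f x| ≤ Mf) (hg : ∀ x ∈ frontier Ω, |g x| ≤ Mg)
    (α : ℝ) (hα : 0 < α)
    (c : ℝ) (hc : 0 < c)
    (hstab : ∀ w, CkNear d 2 (closure Ω) w →
      Real.sqrt (∫ x in Ω, (w x)^2)
        ≤ c * (Real.sqrt (∫ x in Ω, (lap d w x)^2) + Real.sqrt (∫ x, (w x)^2 ∂σm)))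
    (u uθ : (Fin d → ℝ) → ℝ)
    (hu : CkNear d 2 (closure Ω) u) (huθ : CkNear d 2 (closure Ω) uθ)
    (hpde : ∀ x ∈ Ω, - lap d u x = f x) (hbc : ∀ᵐ x ∂σm, u x = g x) :
    (∫ x in Ω, (u x - uθ x)^2) ≤ 2 * c^2 * max 1 (1/α) * pinnLoss d Ω σm f g α uθ :=
  pinn_L2_bound_by_loss_general Ω hΩo σm f g α hα c hstab u uθ hu huθ hpde hbc

end
end

section
/- Let ν be a probability measure on a measurable space S, let X_1,…,X_n be i.i.d. S-valued random variables with law ν, and let ω_1,…,ω_n be i.i.d. Rademacher random variables independent of (X_1,…,X_n). Let H be a countable nonempty family of measurable functions S → ℝ that is uniformly bounded by some M < ∞. Then E[ sup_{h∈H} ( ∫_S h dν − (1/n) Σ_{k=1}^n h(X_k) ) ] ≤ 2 E[ sup_{h∈H} (1/n) Σ_{k=1}^n ω_k h(X_k) ], i.e. the expected uniform deviation of the empirical mean from the true mean over H is at most twice the Rademacher complexity R_n(H). -/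
open MeasureTheory Set

noncomputable section

/-- The value `±1` of a Rademacher sign encoded as a Boolean. -/
def sgn (b : Bool) : ℝ := if b then 1 else -1

/-- Joint law of `n` i.i.d. samples from `ν` together with `n` independent
uniform Rademacher signs. -/
def radMeasure {S : Type*} [MeasurableSpace S] (ν : Measure S) (n : ℕ) :
    Measure ((Fin n → S) × (Fin n → Bool)) :=
  (Measure.pi fun _ => ν).prod (Measure.pi fun _ => (PMF.uniformOfFintype Bool).toMeasure)

/-- The Rademacher complexity `R_n(F)`. -/
def radComplexity {S : Type*} [MeasurableSpace S] (ν : Measure S) (n : ℕ)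
    (F : Set (S → ℝ)) : ℝ :=
  ∫ p, sSup ((fun v => (n : ℝ)⁻¹ * ∑ j, sgn (p.2 j) * v (p.1 j)) '' F) ∂(radMeasure ν n)

/-!
Let `Y` be an independent copy of the sample `X`. Since the empirical mean over `Y` has
expectation `∫ h dν`, and a supremum of expectations is at most the expectation of the supremum,
the left side is bounded by `E sup_h (1/n) Σ (h(Y_k) - h(X_k))`. Exchanging `X_k` and `Y_k` at the
coordinates where a sign `ε_k` is `-1` does not change the joint law of `(X, Y)`, so the signs can
be inserted for free. Splitting the supremum of a sum then leaves two Rademacher averages, with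
signs `ε` and `-ε`, and these have the same law.
-/

lemma sgn_not (b : Bool) : sgn (!b) = -sgn b := by cases b <;> simp [sgn]

lemma abs_sgn (b : Bool) : |sgn b| = 1 := by cases b <;> simp [sgn]

lemma abs_inv_mul_sum_le {n : ℕ} (hn : n ≠ 0) {g : Fin n → ℝ} {C : ℝ} (hg : ∀ k, |g k| ≤ C) :
    |(n : ℝ)⁻¹ * ∑ k, g k| ≤ C := by
  rw [abs_mul, abs_inv, Nat.abs_cast, inv_mul_le_iff₀ (by positivity)]
  calc |∑ k, g k| ≤ ∑ k, |g k| := Finset.abs_sum_le_sum_abs _ _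
    _ ≤ ∑ _k : Fin n, C := Finset.sum_le_sum fun k _ => hg k
    _ = n * C := by simp

lemma abs_ciSup_le {ι : Type*} [Nonempty ι] {g : ι → ℝ} {C : ℝ} (hg : ∀ i, |g i| ≤ C) :
    |⨆ i, g i| ≤ C :=
  abs_le.2 ⟨(abs_le.1 (hg (Classical.arbitrary ι))).1.trans
      (le_ciSup ⟨C, forall_mem_range.2 fun i => (abs_le.1 (hg i)).2⟩ _),
    ciSup_le fun i => (abs_le.1 (hg i)).2⟩

lemma MeasureTheory.MeasurePreserving.integral_comp_of_aestronglyMeasurable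
    {α β : Type*} [MeasurableSpace α] [MeasurableSpace β] {μ : Measure α} {ν : Measure β}
    {f : α → β} (hf : MeasurePreserving f μ ν) {g : β → ℝ} (hg : AEStronglyMeasurable g ν) :
    ∫ x, g (f x) ∂μ = ∫ y, g y ∂ν := by
  rw [← hf.map_eq] at hg ⊢
  exact (integral_map hf.aemeasurable hg).symm

lemma integral_pi_inv_mul_sum_comp_eval {α : Type*} [MeasurableSpace α] {n : ℕ} (hn : n ≠ 0)
    (ν : Measure α) [IsProbabilityMeasure ν] {g : α → ℝ} (hg : Integrable g ν) :
    ∫ y, (n : ℝ)⁻¹ * ∑ k, g (y k) ∂(Measure.pi fun _ : Fin n => ν) = ∫ a, g a ∂ν := by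
  have heval (k : Fin n) := measurePreserving_eval (fun _ : Fin n => ν) k
  rw [integral_const_mul, integral_finsetSum (f := fun (k : Fin n) (y : Fin n → α) => g (y k)) _
    fun k _ => (heval k).integrable_comp_of_integrable hg]
  simp_rw [fun k => (heval k).integral_comp_of_aestronglyMeasurable hg.aestronglyMeasurable]
  simp [hn]

lemma measurePreserving_uniformOfFintype {β : Type*} [Fintype β] [Nonempty β] [MeasurableSpace β]
    [DiscreteMeasurableSpace β] (e : β ≃ β) :
    MeasurePreserving e (PMF.uniformOfFintype β).toMeasure (PMF.uniformOfFintype β).toMeasure := by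
  refine ⟨.of_discrete, Measure.ext_iff_singleton.2 fun b => ?_⟩
  rw [Measure.map_apply .of_discrete (.of_discrete), ← Equiv.image_symm_eq_preimage,
    image_singleton, PMF.toMeasure_apply_singleton _ _ (.of_discrete),
    PMF.toMeasure_apply_singleton _ _ (.of_discrete)]
  simp

abbrev signMeasure (n : ℕ) : Measure (Fin n → Bool) :=
  Measure.pi fun _ => (PMF.uniformOfFintype Bool).toMeasure

lemma integral_signMeasure_comp_not {n : ℕ} (g : (Fin n → Bool) → ℝ) :
    ∫ ε, g (fun k => !ε k) ∂signMeasure n = ∫ ε, g ε ∂signMeasure n :=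
  (measurePreserving_pi _ _ fun _ => measurePreserving_uniformOfFintype Equiv.boolNot
    ).integral_comp_of_aestronglyMeasurable Measurable.of_discrete.aestronglyMeasurable

section Symmetrization

variable {α ι : Type*} {n : ℕ} {f : ι → α → ℝ} {M : ℝ}

def signedSup (f : ι → α → ℝ) (ε : Fin n → Bool) (x : Fin n → α) : ℝ :=
  ⨆ i, (n : ℝ)⁻¹ * ∑ k, sgn (ε k) * f i (x k)

lemma abs_signedMean_le (hn : n ≠ 0) (hM : ∀ i a, |f i a| ≤ M) (i : ι) (ε : Fin n → Bool)
    (x : Fin n → α) : |(n : ℝ)⁻¹ * ∑ k, sgn (ε k) * f i (x k)| ≤ M :=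
  abs_inv_mul_sum_le hn fun k => by rw [abs_mul, abs_sgn, one_mul]; exact hM i _

lemma le_signedSup (hn : n ≠ 0) (hM : ∀ i a, |f i a| ≤ M) (i : ι) (ε : Fin n → Bool)
    (x : Fin n → α) : (n : ℝ)⁻¹ * ∑ k, sgn (ε k) * f i (x k) ≤ signedSup f ε x :=
  le_ciSup ⟨M, forall_mem_range.2 fun j => (abs_le.1 (abs_signedMean_le hn hM j ε x)).2⟩ i

lemma abs_signedSup_le [Nonempty ι] (hn : n ≠ 0) (hM : ∀ i a, |f i a| ≤ M) (ε : Fin n → Bool)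
    (x : Fin n → α) : |signedSup f ε x| ≤ M :=
  abs_ciSup_le fun i => abs_signedMean_le hn hM i ε x

lemma measurable_signedSup [MeasurableSpace α] [Countable ι] (hf : ∀ i, Measurable (f i)) :
    Measurable (Function.uncurry (signedSup f : (Fin n → Bool) → (Fin n → α) → ℝ)) :=
  Measurable.iSup fun i => by
    have : Measurable sgn := measurable_from_top
    fun_prop

lemma integrable_signedSup_comp [MeasurableSpace α] [Countable ι] [Nonempty ι] (hn : n ≠ 0)
    (hf : ∀ i, Measurable (f i)) (hM : ∀ i a, |f i a| ≤ M) {β : Type*} [MeasurableSpace β]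
    (μ : Measure β) [IsFiniteMeasure μ] {ε : β → Fin n → Bool} {x : β → Fin n → α}
    (hε : Measurable ε) (hx : Measurable x) :
    Integrable (fun b => signedSup f (ε b) (x b)) μ :=
  .of_bound ((measurable_signedSup hf).comp (hε.prodMk hx)).aestronglyMeasurable M
    (ae_of_all _ fun b => abs_signedSup_le hn hM (ε b) (x b))

-- A point `q : Fin n → α × α` pairs the sample `(q k).1` with its independent ghost copy `(q k).2`.
def pairDiff (f : ι → α → ℝ) (i : ι) (q : α × α) : ℝ := f i q.2 - f i q.1

def condSwap (ε : Fin n → Bool) (q : Fin n → α × α) : Fin n → α × α :=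
  fun k => if ε k then q k else (q k).swap

lemma measurable_pairDiff [MeasurableSpace α] (hf : ∀ i, Measurable (f i)) (i : ι) :
    Measurable (pairDiff f i) :=
  ((hf i).comp measurable_snd).sub ((hf i).comp measurable_fst)

lemma abs_pairDiff_le (hM : ∀ i a, |f i a| ≤ M) (i : ι) (q : α × α) :
    |pairDiff f i q| ≤ 2 * M := by
  unfold pairDiff
  linarith [abs_sub (f i q.2) (f i q.1), hM i q.1, hM i q.2]

lemma measurePreserving_condSwap [MeasurableSpace α] (ν : Measure α) [SigmaFinite ν]
    (ε : Fin n → Bool) :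
    MeasurePreserving (condSwap ε) (Measure.pi fun _ => ν.prod ν) (Measure.pi fun _ => ν.prod ν) :=
  measurePreserving_pi (f := fun k (p : α × α) => if ε k then p else p.swap) _ _ fun k => by
    cases ε k
    · exact Measure.measurePreserving_swap
    · exact MeasurePreserving.id _

lemma signedSup_pairDiff_eq_condSwap (f : ι → α → ℝ) (ε : Fin n → Bool) (q : Fin n → α × α) :
    signedSup (pairDiff f) ε q = signedSup (pairDiff f) (fun _ => true) (condSwap ε q) := by
  refine iSup_congr fun i => congrArg _ (Finset.sum_congr rfl fun k _ => ?_)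
  cases h : ε k <;> simp [condSwap, sgn, pairDiff, h]

lemma signedSup_pairDiff_le [Nonempty ι] (hn : n ≠ 0) (hM : ∀ i a, |f i a| ≤ M) (ε : Fin n → Bool)
    (q : Fin n → α × α) :
    signedSup (pairDiff f) ε q
      ≤ signedSup f ε (fun k => (q k).2) + signedSup f (fun k => !ε k) (fun k => (q k).1) :=
  ciSup_le fun i => by
    have hsplit : (n : ℝ)⁻¹ * ∑ k, sgn (ε k) * pairDiff f i (q k)
        = (n : ℝ)⁻¹ * ∑ k, sgn (ε k) * f i (q k).2
          + (n : ℝ)⁻¹ * ∑ k, sgn (!ε k) * f i (q k).1 := by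
      rw [← mul_add, ← Finset.sum_add_distrib]
      congr 1
      refine Finset.sum_congr rfl fun k _ => ?_
      simp only [pairDiff, sgn_not]
      ring
    rw [hsplit]
    exact add_le_add (le_signedSup hn hM i _ _) (le_signedSup hn hM i _ _)

variable [MeasurableSpace α] [Countable ι] [Nonempty ι] (ν : Measure α) [IsProbabilityMeasure ν]

lemma iSup_integral_sub_mean_le_integral_pairDiff (hn : n ≠ 0) (hf : ∀ i, Measurable (f i))
    (hM : ∀ i a, |f i a| ≤ M) (x : Fin n → α) :
    ⨆ i, (∫ a, f i a ∂ν - (n : ℝ)⁻¹ * ∑ k, f i (x k))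
      ≤ ∫ y, signedSup (pairDiff f) (fun _ => true) (fun k => (x k, y k))
          ∂(Measure.pi fun _ => ν) := by
  refine ciSup_le fun i => ?_
  have hfi : Integrable (f i) ν := .of_bound (hf i).aestronglyMeasurable M (ae_of_all _ (hM i))
  have hmean : Integrable (fun y : Fin n → α => (n : ℝ)⁻¹ * ∑ k, f i (y k))
      (Measure.pi fun _ => ν) :=
    (integrable_finsetSum _ fun k _ =>
      (measurePreserving_eval _ k).integrable_comp_of_integrable hfi).const_mul _
  have hdiff : (fun y : Fin n → α => (n : ℝ)⁻¹ * ∑ k, sgn true * pairDiff f i (x k, y k))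
      = fun y => (n : ℝ)⁻¹ * ∑ k, f i (y k) - (n : ℝ)⁻¹ * ∑ k, f i (x k) := by
    funext y
    simp [pairDiff, sgn, mul_sub, Finset.sum_sub_distrib]
  calc ∫ a, f i a ∂ν - (n : ℝ)⁻¹ * ∑ k, f i (x k)
      = ∫ y, ((n : ℝ)⁻¹ * ∑ k, f i (y k) - (n : ℝ)⁻¹ * ∑ k, f i (x k))
          ∂(Measure.pi fun _ => ν) := by
        rw [integral_sub hmean (integrable_const _), integral_pi_inv_mul_sum_comp_eval hn ν hfi,
          integral_const]
        simp
    _ = ∫ y, (n : ℝ)⁻¹ * ∑ k, sgn true * pairDiff f i (x k, y k) ∂(Measure.pi fun _ => ν) := by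
        rw [hdiff]
    _ ≤ _ :=
      integral_mono (hdiff ▸ hmean.sub (integrable_const _))
        (integrable_signedSup_comp hn (measurable_pairDiff hf) (abs_pairDiff_le hM) _
          measurable_const (by fun_prop))
        fun y => le_signedSup hn (abs_pairDiff_le hM) i _ _

lemma integrable_iSup_integral_sub_mean (hn : n ≠ 0) (hf : ∀ i, Measurable (f i))
    (hM : ∀ i a, |f i a| ≤ M) :
    Integrable (fun x : Fin n → α => ⨆ i, (∫ a, f i a ∂ν - (n : ℝ)⁻¹ * ∑ k, f i (x k)))
      (Measure.pi fun _ => ν) := by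
  have hint (i : ι) : |∫ a, f i a ∂ν| ≤ M := by
    simpa using norm_integral_le_of_norm_le_const (μ := ν) (f := f i) (ae_of_all _ (hM i))
  refine .of_bound (Measurable.iSup fun i => by fun_prop).aestronglyMeasurable (2 * M)
    (ae_of_all _ fun x => abs_ciSup_le fun i => ?_)
  linarith [abs_sub (∫ a, f i a ∂ν) ((n : ℝ)⁻¹ * ∑ k, f i (x k)), hint i,
    abs_inv_mul_sum_le hn fun k => hM i (x k)]

lemma integral_iSup_integral_sub_mean_le_integral_pairDiff (hn : n ≠ 0) (hf : ∀ i, Measurable (f i))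
    (hM : ∀ i a, |f i a| ≤ M) :
    ∫ x : Fin n → α, ⨆ i, (∫ a, f i a ∂ν - (n : ℝ)⁻¹ * ∑ k, f i (x k)) ∂(Measure.pi fun _ => ν)
      ≤ ∫ q, signedSup (pairDiff f) (fun _ : Fin n => true) q ∂(Measure.pi fun _ => ν.prod ν) := by
  set μ := Measure.pi fun _ : Fin n => ν
  have hzip :=
    (measurePreserving_arrowProdEquivProdArrow α α (Fin n) (fun _ => ν) (fun _ => ν)).symm
  have hD : Integrable (fun p : (Fin n → α) × (Fin n → α) =>
      signedSup (pairDiff f) (fun _ => true) (fun k => (p.1 k, p.2 k))) (μ.prod μ) :=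
    integrable_signedSup_comp hn (measurable_pairDiff hf) (abs_pairDiff_le hM) _
      measurable_const hzip.measurable
  calc _ ≤ ∫ x, ∫ y, signedSup (pairDiff f) (fun _ => true) (fun k => (x k, y k)) ∂μ ∂μ :=
        integral_mono (integrable_iSup_integral_sub_mean ν hn hf hM) hD.integral_prod_left
          (iSup_integral_sub_mean_le_integral_pairDiff ν hn hf hM)
    _ = ∫ p, signedSup (pairDiff f) (fun _ => true) (fun k => (p.1 k, p.2 k)) ∂(μ.prod μ) :=
        (integral_prod _ hD).symm
    _ = _ := hzip.integral_comp' (signedSup (pairDiff f) (fun _ => true))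

lemma integral_signedSup_pairDiff_le (hn : n ≠ 0) (hf : ∀ i, Measurable (f i))
    (hM : ∀ i a, |f i a| ≤ M) (ε : Fin n → Bool) :
    ∫ q, signedSup (pairDiff f) (fun _ : Fin n => true) q ∂(Measure.pi fun _ => ν.prod ν)
      ≤ ∫ y, signedSup f ε y ∂(Measure.pi fun _ => ν)
        + ∫ x, signedSup f (fun k => !ε k) x ∂(Measure.pi fun _ => ν) := by
  have hfst := measurePreserving_pi (f := fun _ => Prod.fst) (fun _ : Fin n => ν.prod ν)
    (fun _ => ν) fun _ => measurePreserving_fst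
  have hsnd := measurePreserving_pi (f := fun _ => Prod.snd) (fun _ : Fin n => ν.prod ν)
    (fun _ => ν) fun _ => measurePreserving_snd
  have hint (ε' : Fin n → Bool) : Integrable (signedSup f ε') (Measure.pi fun _ => ν) :=
    integrable_signedSup_comp hn hf hM _ (ε := fun _ => ε') measurable_const measurable_id
  have hpair (ε' : Fin n → Bool) :
      Integrable (signedSup (pairDiff f) ε') (Measure.pi fun _ => ν.prod ν) :=
    integrable_signedSup_comp hn (measurable_pairDiff hf) (abs_pairDiff_le hM) _
      (ε := fun _ => ε') measurable_const measurable_id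
  have hsndε := hsnd.integrable_comp_of_integrable (hint ε)
  have hfstε := hfst.integrable_comp_of_integrable (hint fun k => !ε k)
  calc ∫ q, signedSup (pairDiff f) (fun _ => true) q ∂(Measure.pi fun _ => ν.prod ν)
      = ∫ q, signedSup (pairDiff f) (fun _ => true) (condSwap ε q)
          ∂(Measure.pi fun _ => ν.prod ν) :=
        ((measurePreserving_condSwap ν ε).integral_comp_of_aestronglyMeasurable
          (hpair _).aestronglyMeasurable).symm
    _ = ∫ q, signedSup (pairDiff f) ε q ∂(Measure.pi fun _ => ν.prod ν) := by
        simp only [← signedSup_pairDiff_eq_condSwap]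
    _ ≤ ∫ q, (signedSup f ε (fun k => (q k).2) + signedSup f (fun k => !ε k) (fun k => (q k).1))
          ∂(Measure.pi fun _ => ν.prod ν) :=
        integral_mono (hpair ε) (hsndε.add hfstε) (signedSup_pairDiff_le hn hM ε)
    _ = _ := (integral_add hsndε hfstε).trans <| congrArg₂ (· + ·)
        (hsnd.integral_comp_of_aestronglyMeasurable (hint ε).aestronglyMeasurable)
        (hfst.integral_comp_of_aestronglyMeasurable (hint _).aestronglyMeasurable)

lemma integral_iSup_integral_sub_mean_le_two_mul (hn : n ≠ 0) (hf : ∀ i, Measurable (f i))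
    (hM : ∀ i a, |f i a| ≤ M) :
    ∫ x : Fin n → α, ⨆ i, (∫ a, f i a ∂ν - (n : ℝ)⁻¹ * ∑ k, f i (x k)) ∂(Measure.pi fun _ => ν)
      ≤ 2 * ∫ ε, ∫ x, signedSup f ε x ∂(Measure.pi fun _ => ν) ∂signMeasure n := by
  set r := fun ε : Fin n → Bool => ∫ x, signedSup f ε x ∂(Measure.pi fun _ => ν)
  calc _ ≤ ∫ q, signedSup (pairDiff f) (fun _ : Fin n => true) q ∂(Measure.pi fun _ => ν.prod ν) :=
        integral_iSup_integral_sub_mean_le_integral_pairDiff ν hn hf hM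
    _ = ∫ _ε, ∫ q, signedSup (pairDiff f) (fun _ : Fin n => true) q
          ∂(Measure.pi fun _ => ν.prod ν) ∂signMeasure n := by
        simp
    _ ≤ ∫ ε, (r ε + r fun k => !ε k) ∂signMeasure n :=
        integral_mono (integrable_const _) .of_finite
          (integral_signedSup_pairDiff_le ν hn hf hM)
    _ = 2 * ∫ ε, r ε ∂signMeasure n := by
        rw [integral_add .of_finite .of_finite, integral_signMeasure_comp_not r]
        ring

lemma radComplexity_range (hn : n ≠ 0) (hf : ∀ i, Measurable (f i)) (hM : ∀ i a, |f i a| ≤ M) :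
    radComplexity ν n (range f)
      = ∫ ε, ∫ x, signedSup f ε x ∂(Measure.pi fun _ => ν) ∂signMeasure n := by
  have hrad : radComplexity ν n (range f)
      = ∫ p, signedSup f p.2 p.1 ∂((Measure.pi fun _ => ν).prod (signMeasure n)) := by
    simp only [radComplexity, radMeasure, ← range_comp, sSup_range]
    rfl
  rw [hrad, integral_prod_symm _
    (integrable_signedSup_comp hn hf hM _ measurable_snd measurable_fst)]

end Symmetrization

/-- Symmetrization: the expected uniform deviation of the empirical mean from the true
mean over a countable uniformly bounded class `H` is at most twice the Rademacher
complexity `R_n(H)`. -/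
theorem symmetrization {S : Type*} [MeasurableSpace S]
    (ν : Measure S) (hν : IsProbabilityMeasure ν)
    (n : ℕ) (hn : 0 < n)
    (H : Set (S → ℝ)) (hHc : H.Countable) (hHne : H.Nonempty)
    (hHmeas : ∀ h ∈ H, Measurable h)
    (M : ℝ) (hHbd : ∀ h ∈ H, ∀ x, |h x| ≤ M) :
    (∫ X : Fin n → S,
        sSup ((fun h => (∫ s, h s ∂ν) - (n : ℝ)⁻¹ * ∑ k, h (X k)) '' H)
        ∂(Measure.pi fun _ => ν))
      ≤ 2 * radComplexity ν n H := by
  have : Countable H := hHc.to_subtype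
  have : Nonempty H := hHne.to_subtype
  have hf (h : H) : Measurable (h : S → ℝ) := hHmeas h h.2
  have hM (h : H) (x : S) : |(h : S → ℝ) x| ≤ M := hHbd h h.2 x
  rw [← Subtype.range_coe (s := H), radComplexity_range ν hn.ne' hf hM]
  simp only [← range_comp, sSup_range]
  exact integral_iSup_integral_sub_mean_le_two_mul ν hn.ne' hf hM

end
end
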